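/- Path-independence modulo endpoints: under the same hypotheses, if p and q are paths with ∂₀p = ∂₀q, and o is a diamond causally disjoint from both ∂₁p and ∂₁q, then z(p) A z(p)* = z(q) A z(q)* for all A ∈ R(o). -/

import Mathlib

/-- A 1-simplex of a poset `K`: two faces and a support dominating both. -/
structure OneSimplex (K : Type*) [PartialOrder K] where
  face0 : K
  face1 : K
  supp : K
  le0 : face0 ≤ supp
  le1 : face1 ≤ supp

/-- The reverse of a 1-simplex: same support, exchanged faces. -/
def OneSimplex.rev {K : Type*} [PartialOrder K] (b : OneSimplex K) : OneSimplex K :=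
  ⟨b.face1, b.face0, b.supp, b.le1, b.le0⟩

/-- The degenerate 1-simplex `σ₀ a` at a 0-simplex `a`. -/
def OneSimplex.degenerate {K : Type*} [PartialOrder K] (a : K) : OneSimplex K :=
  ⟨a, a, a, le_refl a, le_refl a⟩

/-- A 2-simplex of a poset `K`, presented by its three vertices, the supports of its
three faces, and its own support, with all required order relations. Its faces
`∂₀c, ∂₁c, ∂₂c` satisfy the simplicial identities by construction. -/
structure TwoSimplex (K : Type*) [PartialOrder K] where
  vstart : K
  vmid : K
  vend : K
  s0 : K
  s1 : K
  s2 : K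
  supp : K
  hs0 : s0 ≤ supp
  hs1 : s1 ≤ supp
  hs2 : s2 ≤ supp
  h0s : vmid ≤ s0
  h0e : vend ≤ s0
  h1s : vstart ≤ s1
  h1e : vend ≤ s1
  h2s : vstart ≤ s2
  h2e : vmid ≤ s2

/-- The face `∂₀c` (from `vmid` to `vend`). -/
def TwoSimplex.face0 {K : Type*} [PartialOrder K] (c : TwoSimplex K) : OneSimplex K :=
  ⟨c.vend, c.vmid, c.s0, c.h0e, c.h0s⟩

/-- The face `∂₁c` (from `vstart` to `vend`). -/
def TwoSimplex.face1 {K : Type*} [PartialOrder K] (c : TwoSimplex K) : OneSimplex K :=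
  ⟨c.vend, c.vstart, c.s1, c.h1e, c.h1s⟩

/-- The face `∂₂c` (from `vstart` to `vmid`). -/
def TwoSimplex.face2 {K : Type*} [PartialOrder K] (c : TwoSimplex K) : OneSimplex K :=
  ⟨c.vmid, c.vstart, c.s2, c.h2e, c.h2s⟩

/-- A path in the poset `K` from `x` to `y`: a nonempty composable string of
1-simplices, `∂₁` of the first being `x` and `∂₀` of the last being `y`. -/
inductive PPath (K : Type*) [PartialOrder K] : K → K → Type _
  | single (b : OneSimplex K) : PPath K b.face1 b.face0
  | cons (b : OneSimplex K) {x : K} (p : PPath K x b.face1) : PPath K x b.face0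

/-- Composition of paths: `q.comp p` first traverses `p`, then `q`. -/
def PPath.comp {K : Type*} [PartialOrder K] : ∀ {x y w : K}, PPath K y w → PPath K x y → PPath K x w
  | _, _, _, .single b, p => .cons b p
  | _, _, _, .cons b q, p => .cons b (q.comp p)

/-- The reverse of a path. -/
def PPath.rev {K : Type*} [PartialOrder K] : ∀ {x y : K}, PPath K x y → PPath K y x
  | _, _, .single b => .single b.rev
  | _, _, .cons b p => PPath.comp p.rev (.single b.rev)

/-- Multiplicative extension of a function on 1-simplices to paths:
`z(bₙ * ⋯ * b₁) = z(bₙ) ⋯ z(b₁)`. -/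
def PPath.eval {K : Type*} [PartialOrder K] {M : Type*} [Monoid M]
    (z : OneSimplex K → M) : ∀ {x y : K}, PPath K x y → M
  | _, _, .single b => z b
  | _, _, .cons b p => z b * p.eval z

/-- The support of the path is causally disjoint from `o` (every 1-simplex of the path
has support `⊥ o`). -/
def PPath.suppDisjoint {K : Type*} [PartialOrder K] (perp : K → K → Prop) (o : K) :
    ∀ {x y : K}, PPath K x y → Prop
  | _, _, .single b => perp b.supp o
  | _, _, .cons b p => perp b.supp o ∧ p.suppDisjoint perp o

/-- Homotopy of paths with the same endpoints: the equivalence relation generated by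
elementary deformations (replacing `∂₁c` by `∂₀c * ∂₂c` for a 2-simplex `c`), compatible
with composition. -/
inductive PHomotopic {K : Type*} [PartialOrder K] : ∀ {x y : K}, PPath K x y → PPath K x y → Prop
  | refl {x y : K} (p : PPath K x y) : PHomotopic p p
  | symm {x y : K} {p q : PPath K x y} : PHomotopic p q → PHomotopic q p
  | trans {x y : K} {p q r : PPath K x y} : PHomotopic p q → PHomotopic q r → PHomotopic p r
  | deform (c : TwoSimplex K) :
      PHomotopic (.single c.face1) ((PPath.single c.face0).comp (.single c.face2))
  | comp_congr {x y w : K} {q q' : PPath K y w} {p p' : PPath K x y} :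
      PHomotopic q q' → PHomotopic p p' → PHomotopic (q.comp p) (q'.comp p')

/-! `z(q)* z(p) = z(q̄ * p)` is the cocycle of a path whose endpoints are both causally disjoint
from `o`. Closing that path up by a path `s` that avoids `o` gives a loop, which deforms into a loop
avoiding `o`. By Haag duality the cocycle along `s` and along the deformed loop commutes with
`R(o)`, hence so does `z(q)* z(p)`, and conjugation by `z(p)` and by `z(q)` agree on `R(o)`. -/

theorem Commute.star_left_of_mem_unitary {M : Type*} [Monoid M] [StarMul M] {u A : M}
    (hu : u ∈ unitary M) (h : Commute u A) : Commute (star u) A := by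
  have hconj : star u * A * u = A := (commute_unitary_iff_star_left_conjugate hu).mp h
  calc star u * A = star u * A * u * star u := by
        rw [mul_assoc _ u, Unitary.mul_star_self_of_mem hu, mul_one]
    _ = A * star u := by rw [hconj]

theorem conj_eq_conj_of_commute_star_mul {M : Type*} [Monoid M] [StarMul M] {u v A : M}
    (hu : u ∈ unitary M) (hv : v ∈ unitary M) (h : Commute (star v * u) A) :
    u * A * star u = v * A * star v := by
  set w := star v * u
  have hw : w ∈ unitary M := mul_mem (Unitary.star_mem hv) hu
  have hconj : w * A * star w = A := (commute_unitary_iff_star_right_conjugate hw).mp h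
  have hu_eq : u = v * w := by rw [← mul_assoc, Unitary.mul_star_self_of_mem hv, one_mul]
  calc u * A * star u = v * (w * A * star w) * star v := by
        rw [hu_eq, star_mul]; simp only [mul_assoc]
    _ = v * A * star v := by rw [hconj]

namespace PPath

variable {K : Type*} [PartialOrder K] {M : Type*} [Monoid M]

theorem eval_comp (z : OneSimplex K → M) :
    ∀ {x y w : K} (q : PPath K y w) (p : PPath K x y),
      (q.comp p).eval z = q.eval z * p.eval z
  | _, _, _, .single _, _ => rfl
  | _, _, _, .cons b q, p => by
    change z b * (q.comp p).eval z = z b * q.eval z * p.eval z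
    rw [eval_comp z q p, mul_assoc]

theorem eval_eq_of_homotopic {z : OneSimplex K → M}
    (hzc : ∀ c : TwoSimplex K, z c.face0 * z c.face2 = z c.face1)
    {x y : K} {p q : PPath K x y} (h : PHomotopic p q) : p.eval z = q.eval z := by
  induction h with
  | refl => rfl
  | symm _ ih => exact ih.symm
  | trans _ _ ih₁ ih₂ => exact ih₁.trans ih₂
  | deform c => exact (hzc c).symm
  | comp_congr _ _ ih₁ ih₂ => rw [eval_comp, eval_comp, ih₁, ih₂]

theorem commute_eval_of_suppDisjoint {z : OneSimplex K → M} {perp : K → K → Prop} {o : K}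
    {A : M} (hA : ∀ b : OneSimplex K, perp b.supp o → Commute (z b) A) :
    ∀ {x y : K} (p : PPath K x y), p.suppDisjoint perp o → Commute (p.eval z) A
  | _, _, .single b, hp => hA b hp
  | _, _, .cons b p, hp => (hA b hp.1).mul_left (commute_eval_of_suppDisjoint hA p hp.2)

variable [StarMul M] {z : OneSimplex K → M}

theorem eval_mem_unitary (hzu : ∀ b : OneSimplex K, z b ∈ unitary M) :
    ∀ {x y : K} (p : PPath K x y), p.eval z ∈ unitary M
  | _, _, .single b => hzu b
  | _, _, .cons b p => mul_mem (hzu b) (eval_mem_unitary hzu p)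

/-- `z(σ₀ a)` is an idempotent unit. -/
theorem cocycle_degenerate (hzu : ∀ b : OneSimplex K, z b ∈ unitary M)
    (hzc : ∀ c : TwoSimplex K, z c.face0 * z c.face2 = z c.face1) (a : K) :
    z (OneSimplex.degenerate a) = 1 :=
  (IsIdempotentElem.iff_eq_one_of_isUnit (Unitary.toUnits ⟨_, hzu _⟩).isUnit).mp
    (hzc ⟨a, a, a, a, a, a, a, le_rfl, le_rfl, le_rfl, le_rfl, le_rfl, le_rfl, le_rfl, le_rfl,
      le_rfl⟩)

/-- The 2-simplex with faces `b.rev`, `σ₀ b.face1`, `b` gives `z(b.rev) z(b) = 1`. -/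
theorem cocycle_rev (hzu : ∀ b : OneSimplex K, z b ∈ unitary M)
    (hzc : ∀ c : TwoSimplex K, z c.face0 * z c.face2 = z c.face1) (b : OneSimplex K) :
    z b.rev = star (z b) := by
  have hinv : z b.rev * z b = 1 := by
    rw [← cocycle_degenerate hzu hzc b.face1]
    exact hzc ⟨b.face1, b.face0, b.face1, b.supp, b.face1, b.supp, b.supp, le_rfl, b.le1,
      le_rfl, b.le0, b.le1, le_rfl, le_rfl, b.le1, b.le0⟩
  calc z b.rev = z b.rev * (z b * star (z b)) := by
        rw [Unitary.mul_star_self_of_mem (hzu b), mul_one]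
    _ = star (z b) := by rw [← mul_assoc, hinv, one_mul]

theorem eval_rev (hzu : ∀ b : OneSimplex K, z b ∈ unitary M)
    (hzc : ∀ c : TwoSimplex K, z c.face0 * z c.face2 = z c.face1) :
    ∀ {x y : K} (p : PPath K x y), p.rev.eval z = star (p.eval z)
  | _, _, .single b => cocycle_rev hzu hzc b
  | _, _, .cons b p => by
    refine (eval_comp z p.rev (.single b.rev)).trans ?_
    rw [eval_rev hzu hzc p]
    exact (congrArg _ (cocycle_rev hzu hzc b)).trans (star_mul (z b) (p.eval z)).symm

theorem commute_eval_of_perp_endpoints {perp : K → K → Prop}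
    (hccconn : ∀ (o x y : K), perp x o → perp y o →
        ∃ q : PPath K x y, q.suppDisjoint perp o)
    (hdef : ∀ (a o : K), perp a o → ∀ ℓ : PPath K a a,
        ∃ ℓ' : PPath K a a, PHomotopic ℓ ℓ' ∧ ℓ'.suppDisjoint perp o)
    (hzu : ∀ b : OneSimplex K, z b ∈ unitary M)
    (hzc : ∀ c : TwoSimplex K, z c.face0 * z c.face2 = z c.face1)
    {o : K} {A : M} (hA : ∀ b : OneSimplex K, perp b.supp o → Commute (z b) A)
    {x y : K} (r : PPath K x y) (hx : perp x o) (hy : perp y o) :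
    Commute (r.eval z) A := by
  obtain ⟨s, hs⟩ := hccconn o y x hy hx
  obtain ⟨ℓ, hℓ, hℓo⟩ := hdef x o hx (s.comp r)
  have hsu := eval_mem_unitary hzu s
  have hr : r.eval z = star (s.eval z) * ℓ.eval z := by
    rw [← eval_eq_of_homotopic hzc hℓ, eval_comp, ← mul_assoc,
      Unitary.star_mul_self_of_mem hsu, one_mul]
  rw [hr]
  exact ((commute_eval_of_suppDisjoint hA s hs).star_left_of_mem_unitary hsu).mul_left
    (commute_eval_of_suppDisjoint hA ℓ hℓo)

end PPath

open PPath in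
theorem cocycle_conjugation_path_independence_general {K : Type*} [PartialOrder K]
    {H : Type*} [NormedAddCommGroup H] [InnerProductSpace ℂ H] [CompleteSpace H]
    (perp : K → K → Prop)
    (R : K → VonNeumannAlgebra H)
    (hhaag : ∀ a : K, (R a : Set (H →L[ℂ] H)) =
        ⋂ (b : K), ⋂ (_ : perp b a), ((R b).commutant : Set (H →L[ℂ] H)))
    (hccconn : ∀ (o x y : K), perp x o → perp y o →
        ∃ q : PPath K x y, q.suppDisjoint perp o)
    (hdef : ∀ (a o : K), perp a o → ∀ ℓ : PPath K a a,
        ∃ ℓ' : PPath K a a, PHomotopic ℓ ℓ' ∧ ℓ'.suppDisjoint perp o)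
    (z : OneSimplex K → (H →L[ℂ] H))
    (hzu : ∀ b : OneSimplex K, z b ∈ unitary (H →L[ℂ] H))
    (hzc : ∀ c : TwoSimplex K, z c.face0 * z c.face2 = z c.face1)
    (hloc : ∀ b : OneSimplex K, z b ∈ R b.supp) :
    ∀ (x x' w : K) (p : PPath K x w) (q : PPath K x' w) (o : K),
      perp x o → perp x' o → ∀ A ∈ R o,
        p.eval z * A * star (p.eval z) = q.eval z * A * star (q.eval z) := by
  intro x x' w p q o hx hx' A hA
  have hA_comm : ∀ b : OneSimplex K, perp b.supp o → Commute (z b) A := by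
    intro b hb
    have hA' : A ∈ (R o : Set (H →L[ℂ] H)) := hA
    rw [hhaag o] at hA'
    exact VonNeumannAlgebra.mem_commutant_iff.mp (Set.mem_iInter₂.mp hA' b.supp hb) _ (hloc b)
  have hcomm := commute_eval_of_perp_endpoints hccconn hdef hzu hzc hA_comm (q.rev.comp p) hx hx'
  rw [eval_comp, eval_rev hzu hzc] at hcomm
  exact conj_eq_conj_of_commute_star_mul (eval_mem_unitary hzu p) (eval_mem_unitary hzu q) hcomm

theorem cocycle_conjugation_path_independence {K : Type*} [PartialOrder K]
    {H : Type*} [NormedAddCommGroup H] [InnerProductSpace ℂ H] [CompleteSpace H]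
    (perp : K → K → Prop)
    (hsymm : ∀ x y : K, perp x y → perp y x)
    (R : K → VonNeumannAlgebra H)
    (hiso : ∀ ⦃a b : K⦄, a ≤ b → (R a : Set (H →L[ℂ] H)) ⊆ (R b : Set (H →L[ℂ] H)))
    (hhaag : ∀ a : K, (R a : Set (H →L[ℂ] H)) =
        ⋂ (b : K), ⋂ (_ : perp b a), ((R b).commutant : Set (H →L[ℂ] H)))
    (hccconn : ∀ (o x y : K), perp x o → perp y o →
        ∃ q : PPath K x y, q.suppDisjoint perp o)
    (hdef : ∀ (a o : K), perp a o → ∀ ℓ : PPath K a a,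
        ∃ ℓ' : PPath K a a, PHomotopic ℓ ℓ' ∧ ℓ'.suppDisjoint perp o)
    (z : OneSimplex K → (H →L[ℂ] H))
    (hzu : ∀ b : OneSimplex K, z b ∈ unitary (H →L[ℂ] H))
    (hzc : ∀ c : TwoSimplex K, z c.face0 * z c.face2 = z c.face1)
    (hloc : ∀ b : OneSimplex K, z b ∈ R b.supp) :
    ∀ (x x' w : K) (p : PPath K x w) (q : PPath K x' w) (o : K),
      perp x o → perp x' o → ∀ A ∈ R o,
        p.eval z * A * star (p.eval z) = q.eval z * A * star (q.eval z) :=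
  cocycle_conjugation_path_independence_general perp R hhaag hccconn hdef z hzu hzc hloc
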